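/- arXiv:2106.05422 — 2 statements merged into one kernel-verified Lean document; each statement's English description precedes it below -/
import Mathlib

section
/- Let u : (0,∞) → ℝ be continuously differentiable and compactly supported in (0,∞), and let p ≥ 1 be a real number. Then ∫₀^∞ (u(x) − (1/(2p−1)) x u'(x))² x^{−2p} dx = (1/(2p−1)²) ∫₀^∞ u'(x)² x^{−(2p−2)} dx. -/
/-!
Writing `c = 1/(2p-1)`, the integrand expands pointwise as
`c² u'² x^{2-2p} - c (u² x^{1-2p})'`, since the cross term `-2c u u' x^{1-2p}` and the
term `u² x^{-2p}` combine to `-c` times the derivative of `u² x^{1-2p}`. That derivative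
has compact support in `(0, ∞)`, so its integral vanishes.
-/

open MeasureTheory

open Set Filter Function Topology

theorem ContinuousOn.integrable_of_support_subset_isCompact {X E : Type*} [TopologicalSpace X]
    [T2Space X] [MeasurableSpace X] [OpensMeasurableSpace X] [NormedAddCommGroup E]
    {μ : Measure X} [IsFiniteMeasureOnCompacts μ] {f : X → E} {K : Set X}
    (hf : ContinuousOn f K) (hK : IsCompact K) (hsupp : support f ⊆ K) :
    Integrable f μ :=
  (integrableOn_iff_integrable_of_support_subset hsupp).mp (hf.integrableOn_compact hK)

theorem integral_Ioi_deriv_eq_zero_of_support_subset {E : Type*} [NormedAddCommGroup E]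
    [NormedSpace ℝ E] [CompleteSpace E] {w w' : ℝ → E} {a : ℝ} {K : Set ℝ}
    (hK : IsCompact K) (hKa : K ⊆ Ioi a) (hw : support w ⊆ K)
    (hderiv : ∀ x ∈ Ioi a, HasDerivAt w (w' x) x) (hw' : IntegrableOn w' (Ioi a)) :
    ∫ x in Ioi a, w' x = 0 := by
  have hw_zero : ∀ x ∉ K, w x = 0 := fun x hx ↦ notMem_support.mp fun h ↦ hx (hw h)
  have ha : w =ᶠ[𝓝 a] 0 := eventually_of_mem
    (hK.isClosed.isOpen_compl.mem_nhds fun ha ↦ lt_irrefl a (hKa ha)) hw_zero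
  have hlim : Tendsto w atTop (𝓝 0) := tendsto_const_nhds.congr' <|
    EventuallyEq.symm (eventually_of_mem (atTop_le_cocompact hK.compl_mem_cocompact) hw_zero)
  rw [integral_Ioi_of_hasDerivAt_of_tendsto ha.continuousAt.continuousWithinAt hderiv hw' hlim,
    ha.self_of_nhds, Pi.zero_apply, sub_zero]

theorem deriv_eq_zero_of_support_subset {u : ℝ → ℝ} {K : Set ℝ} (hK : IsClosed K)
    (hsupp : support u ⊆ K) {x : ℝ} (hx : x ∉ K) : deriv u x = 0 :=
  notMem_support.mp fun h ↦ hx (closure_minimal hsupp hK (support_deriv_subset h))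

theorem hasDerivAt_sq_mul_rpow {u : ℝ → ℝ} {x : ℝ} (hu : DifferentiableAt ℝ u x) (hx : 0 < x)
    (r : ℝ) :
    HasDerivAt (fun y ↦ u y ^ 2 * y ^ r)
      (2 * u x * deriv u x * x ^ r + r * u x ^ 2 * x ^ (r - 1)) x := by
  refine ((hu.hasDerivAt.fun_pow 2).mul
    (Real.hasDerivAt_rpow_const (Or.inl hx.ne'))).congr_deriv ?_
  ring

theorem sq_sub_mul_mul_rpow_eq {p x : ℝ} (hp : 2 * p - 1 ≠ 0) (hx : 0 < x) (a b : ℝ) :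
    (a - 1 / (2 * p - 1) * x * b) ^ 2 * x ^ (-(2 * p)) =
      1 / (2 * p - 1) ^ 2 * (b ^ 2 * x ^ (-(2 * p - 2))) -
        1 / (2 * p - 1) *
          (2 * a * b * x ^ (1 - 2 * p) + (1 - 2 * p) * a ^ 2 * x ^ (1 - 2 * p - 1)) := by
  have h1 : x ^ (1 - 2 * p) = x * x ^ (-(2 * p)) := by
    rw [show 1 - 2 * p = 1 + -(2 * p) by ring, Real.rpow_add hx, Real.rpow_one]
  have h2 : x ^ (-(2 * p - 2)) = x ^ 2 * x ^ (-(2 * p)) := by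
    rw [show -(2 * p - 2) = 2 + -(2 * p) by ring, Real.rpow_add hx, Real.rpow_two]
  rw [h1, h2, ← one_div_pow, show 1 - 2 * p - 1 = -(2 * p) by ring]
  linear_combination (-(a ^ 2 * x ^ (-(2 * p)))) * one_div_mul_cancel hp

theorem ibp_identity (p : ℝ) (hp : 1 ≤ p) (u : ℝ → ℝ) (hu : ContDiff ℝ 1 u)
    (K : Set ℝ) (hK : IsCompact K) (hKsub : K ⊆ Set.Ioi 0)
    (hsupp : Function.support u ⊆ K) :
    ∫ x in Set.Ioi (0:ℝ), (u x - (1/(2*p-1)) * x * deriv u x)^2 * x ^ (-(2*p)) =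
      (1/(2*p-1)^2) * ∫ x in Set.Ioi (0:ℝ), (deriv u x)^2 * x ^ (-(2*p-2)) := by
  have hp' : 2 * p - 1 ≠ 0 := by linarith
  have hu_out : ∀ x ∉ K, u x = 0 := fun x hx ↦ notMem_support.mp fun h ↦ hx (hsupp h)
  have hdu_out : ∀ x ∉ K, deriv u x = 0 :=
    fun _ ↦ deriv_eq_zero_of_support_subset hK.isClosed hsupp
  have hpow (r : ℝ) : ContinuousOn (fun x : ℝ ↦ x ^ r) K :=
    continuousOn_id.rpow_const fun x hx ↦ Or.inl (hKsub hx).ne'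
  have hcu := hu.continuous
  have hcdu := hu.continuous_deriv le_rfl
  have hF : Integrable (fun x ↦ deriv u x ^ 2 * x ^ (-(2 * p - 2))) :=
    ((hcdu.pow 2).continuousOn.mul (hpow _)).integrable_of_support_subset_isCompact hK
      (support_subset_iff'.mpr fun x hx ↦ by simp [hdu_out x hx])
  have hG : Integrable (fun x ↦ 2 * u x * deriv u x * x ^ (1 - 2 * p) +
      (1 - 2 * p) * u x ^ 2 * x ^ (1 - 2 * p - 1)) := by
    refine ContinuousOn.integrable_of_support_subset_isCompact ?_ hK
      (support_subset_iff'.mpr fun x hx ↦ by simp [hu_out x hx, hdu_out x hx])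
    exact (((continuousOn_const.mul hcu.continuousOn).mul hcdu.continuousOn).mul (hpow _)).add
      ((continuousOn_const.mul (hcu.pow 2).continuousOn).mul (hpow _))
  have hIBP := integral_Ioi_deriv_eq_zero_of_support_subset hK hKsub
    (support_subset_iff'.mpr fun x hx ↦ by simp [hu_out x hx])
    (fun x hx ↦ hasDerivAt_sq_mul_rpow (hu.differentiable one_ne_zero x) hx (1 - 2 * p))
    hG.integrableOn
  calc _ = ∫ x in Ioi 0, 1 / (2 * p - 1) ^ 2 * (deriv u x ^ 2 * x ^ (-(2 * p - 2))) -
        1 / (2 * p - 1) * (2 * u x * deriv u x * x ^ (1 - 2 * p) +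
          (1 - 2 * p) * u x ^ 2 * x ^ (1 - 2 * p - 1)) :=
        setIntegral_congr_fun measurableSet_Ioi fun x hx ↦ sq_sub_mul_mul_rpow_eq hp' hx _ _
    _ = _ := by
      rw [integral_sub (hF.integrableOn.const_mul _) (hG.integrableOn.const_mul _),
        integral_const_mul, integral_const_mul, hIBP, mul_zero, sub_zero]
end

section
/- Let k > 0 and define, for x ≠ 0 and t ∈ ℝ: ω(x,t) = k·sgn(x)|x|^{−1/3}, θ(x,t) = (3√3/2) k² |x|^{1/3} + (9/4) k³ t, and u(x,t) = −(3√3/2) k·sgn(x)|x|^{2/3}. Then for all x ≠ 0 and all t, these functions satisfy ∂_t ω + u ∂_x ω = ∂_x θ and ∂_t θ + u ∂_x θ = 0. -/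
/-- Hoang–Radosz vorticity: `ω(x,t) = k sgn(x) |x|^{-1/3}`. -/
noncomputable def omegaHR (k x t : ℝ) : ℝ := k * Real.sign x * |x| ^ (-(1/3) : ℝ)

/-- Hoang–Radosz density: `θ(x,t) = (3√3/2) k² |x|^{1/3} + (9/4) k³ t`. -/
noncomputable def thetaHR (k x t : ℝ) : ℝ :=
  (3 * Real.sqrt 3 / 2) * k^2 * |x| ^ ((1/3) : ℝ) + (9/4) * k^3 * t

/-- Hoang–Radosz velocity: `u(x,t) = -(3√3/2) k sgn(x) |x|^{2/3}`. -/
noncomputable def uHR (k x t : ℝ) : ℝ :=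
  -(3 * Real.sqrt 3 / 2) * k * Real.sign x * |x| ^ ((2/3) : ℝ)

lemma HR_hasDerivAt_abs_rpow (p : ℝ) {x : ℝ} (hx : x ≠ 0) :
    HasDerivAt (fun y : ℝ => |y| ^ p) (p * |x| ^ (p - 1) * Real.sign x) x := by
  have h1 : HasDerivAt (fun y : ℝ => y ^ p) (p * |x| ^ (p - 1)) |x| :=
    Real.hasDerivAt_rpow_const (Or.inl (abs_ne_zero.2 hx))
  have h2 : HasDerivAt (fun y : ℝ => |y|) (Real.sign x) x := by
    rcases hx.lt_or_gt with h | h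
    · simpa [Real.sign_of_neg h] using hasDerivAt_abs_neg h
    · simpa [Real.sign_of_pos h] using hasDerivAt_abs_pos h
  exact h1.comp x h2

lemma HR_sign_eventually (x : ℝ) (hx : x ≠ 0) :
    ∀ᶠ y in nhds x, Real.sign y = Real.sign x := by
  rcases hx.lt_or_gt with h | h
  · filter_upwards [eventually_lt_nhds h] with y hy
    rw [Real.sign_of_neg hy, Real.sign_of_neg h]
  · filter_upwards [eventually_gt_nhds h] with y hy
    rw [Real.sign_of_pos hy, Real.sign_of_pos h]

theorem hoang_radosz_solution (k : ℝ) (hk : 0 < k) :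
    ∀ x : ℝ, x ≠ 0 → ∀ t : ℝ,
      (deriv (fun s => omegaHR k x s) t
          + uHR k x t * deriv (fun y => omegaHR k y t) x
        = deriv (fun y => thetaHR k y t) x) ∧
      (deriv (fun s => thetaHR k x s) t
          + uHR k x t * deriv (fun y => thetaHR k y t) x = 0) := by
  intro x hx t
  have hA : (0:ℝ) < |x| := abs_pos.2 hx
  have hss : Real.sign x * Real.sign x = 1 := by
    rcases hx.lt_or_gt with h | h
    · simp [Real.sign_of_neg h]
    · simp [Real.sign_of_pos h]
  have dωt : deriv (fun s' => omegaHR k x s') t = 0 := by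
    simp [omegaHR]
  have dθt : deriv (fun s' => thetaHR k x s') t = (9/4)*k^3 := by
    have h : HasDerivAt (fun s' : ℝ =>
        (3 * Real.sqrt 3 / 2) * k^2 * |x| ^ ((1/3) : ℝ) + (9/4) * k^3 * s')
        ((9/4)*k^3) t := by
      simpa using ((hasDerivAt_id t).const_mul ((9/4)*k^3)).const_add
        ((3 * Real.sqrt 3 / 2) * k^2 * |x| ^ ((1/3) : ℝ))
    exact h.deriv
  have dωx : deriv (fun y => omegaHR k y t) x
      = k * Real.sign x * ((-(1/3)) * |x| ^ ((-(1/3) : ℝ) - 1) * Real.sign x) := by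
    have h1 : HasDerivAt (fun y : ℝ => k * Real.sign x * |y| ^ (-(1/3) : ℝ))
        (k * Real.sign x * ((-(1/3)) * |x| ^ ((-(1/3) : ℝ) - 1) * Real.sign x)) x :=
      (HR_hasDerivAt_abs_rpow (-(1/3)) hx).const_mul (k * Real.sign x)
    have h2 : (fun y => omegaHR k y t) =ᶠ[nhds x]
        (fun y : ℝ => k * Real.sign x * |y| ^ (-(1/3) : ℝ)) := by
      filter_upwards [HR_sign_eventually x hx] with y hy
      simp [omegaHR, hy]
    exact (h1.congr_of_eventuallyEq h2).deriv
  have dθx : deriv (fun y => thetaHR k y t) x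
      = (3 * Real.sqrt 3 / 2) * k^2 * ((1/3) * |x| ^ (((1/3) : ℝ) - 1) * Real.sign x) := by
    have h1 : HasDerivAt (fun y : ℝ =>
        (3 * Real.sqrt 3 / 2) * k^2 * |y| ^ ((1/3) : ℝ) + (9/4) * k^3 * t)
        ((3 * Real.sqrt 3 / 2) * k^2 * ((1/3) * |x| ^ (((1/3) : ℝ) - 1) * Real.sign x)) x :=
      ((HR_hasDerivAt_abs_rpow (1/3) hx).const_mul
        ((3 * Real.sqrt 3 / 2) * k^2)).add_const ((9/4) * k^3 * t)
    exact h1.deriv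
  have h3 : Real.sqrt 3 * Real.sqrt 3 = 3 := Real.mul_self_sqrt (by norm_num)
  have e1 : |x| ^ ((2/3) : ℝ) * |x| ^ ((-(1/3) : ℝ) - 1) = |x| ^ (((1/3) : ℝ) - 1) := by
    rw [← Real.rpow_add hA]; norm_num
  have e2 : |x| ^ ((2/3) : ℝ) * |x| ^ (((1/3) : ℝ) - 1) = 1 := by
    rw [← Real.rpow_add hA]; norm_num
  rw [uHR, dωt, dθt, dωx, dθx]
  constructor
  · linear_combination
      ((Real.sqrt 3 / 2) * k^2 * Real.sign x * |x| ^ ((2/3) : ℝ)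
        * |x| ^ ((-(1/3) : ℝ) - 1)) * hss
      + ((Real.sqrt 3 / 2) * k^2 * Real.sign x) * e1
  · linear_combination
      ((-(3/4)) * Real.sqrt 3 * Real.sqrt 3 * k^3 * |x| ^ ((2/3) : ℝ)
        * |x| ^ (((1/3) : ℝ) - 1)) * hss
      + ((-(3/4)) * k^3 * |x| ^ ((2/3) : ℝ) * |x| ^ (((1/3) : ℝ) - 1)) * h3
      + ((-(9/4)) * k^3) * e2
end
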